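/- Let $i_1,i_2\in\{1,\dots,i(n)\}$ with $i_1<i_2$, and write $e_{i_1}=(j_1,k_1)$, $e_{i_2}=(j_2,k_2)$. Then $\Psi_{n,i_1}(x_{i_2})=(r_n|_{M_n})^{-1}\big(r_{n-1}(d_{k_2})\oplus\big(d_{k_2}|_{\Delta_n}+T_{M(i_1,i_2)}(y_{j_2})\big)\big)$, where $M(i_1,i_2)=m(j_2,j_1)$ if $k_2\le k_1$ and $M(i_1,i_2)=m(j_2,j_1-1)$ if $k_2>k_1$ (these values are well defined since $j_1<j_2$ when $k_2\le k_1$ and $j_1-1<j_2$ when $k_2>k_1$). -/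

import Mathlib

/-!
Only the column `k₂` of `e i₂ = (j₂, k₂)` matters. Starting from `x i₂`, whose `Γ_n`-part is
`d k₂ + y j₂`, each `ψ i` with `i₁ < i ≤ i₂` either fixes the current point or, when that point
is `x i` itself, replaces `y j` by `T_{‖y j‖-1} (y j) = y j'` with `j' < j`. The new point is again
in the column, since the lattice ball `f(s_n B_{ℓ∞(Δ_n)})` is stable under this truncation
(`|a + T_s t| ≤ max |a| |a + t|`). The retractions `T^n_j` move `y j₂` in the same way, and a pair
`(j, k₂)` is lexicographically at most `e i` iff `j` is at most the threshold of `e i` (`j_i` if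
`k₂ ≤ k_i`, `j_i - 1` otherwise); so after `ψ I, …, ψ (i + 1)` the height reached is the one of
`T_{c+1} ∘ ⋯ ∘ T_{j₂} (y j₂)` for that threshold `c`. Points are recognised by their restriction
to `Γ_n`, which is injective on `M_n ∪ C_{n-1}`.
-/

open Set

noncomputable section

variable {Γ : Type*} [TopologicalSpace Γ] [DiscreteTopology Γ]

/-- `ℓ∞(Γ)`: the Banach space of bounded real functions on `Γ`
(carrying the discrete topology, so that boundedness is the only constraint). -/
abbrev Linf (Γ : Type*) [TopologicalSpace Γ] [DiscreteTopology Γ] : Type _ :=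
  BoundedContinuousFunction Γ ℝ

/-- The entire part of a real number, toward `0`: `[r] = sign(r)⌊|r|⌋`. -/
def ent (r : ℝ) : ℝ := Real.sign r * ⌊|r|⌋

lemma abs_ent_le (r : ℝ) : |ent r| ≤ |r| := by
  have hsign : |Real.sign r| ≤ 1 := by
    rcases lt_trichotomy r 0 with h | h | h
    · rw [Real.sign_of_neg h]; norm_num
    · rw [h, Real.sign_zero]; norm_num
    · rw [Real.sign_of_pos h]; norm_num
  have hfl : |(⌊|r|⌋ : ℝ)| ≤ |r| := by
    rw [abs_of_nonneg (by exact_mod_cast Int.floor_nonneg.mpr (abs_nonneg r))]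
    exact Int.floor_le _
  calc |ent r| = |Real.sign r| * |(⌊|r|⌋ : ℝ)| := abs_mul _ _
    _ ≤ 1 * |r| := mul_le_mul hsign hfl (abs_nonneg _) zero_le_one
    _ = |r| := one_mul _

/-- The coordinatewise quantization `f : ℓ∞(S) → ℓ∞(S)`, `f(x)(γ) = [x(γ)]`. -/
def quant (x : Linf Γ) : Linf Γ :=
  BoundedContinuousFunction.ofNormedAddCommGroup (fun γ => ent (x γ))
    continuous_of_discreteTopology ‖x‖ (fun γ => by
      rw [Real.norm_eq_abs]
      exact (abs_ent_le (x γ)).trans (by simpa using x.norm_coe_le_norm γ))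

/-- Scalar truncation at level `s`. -/
def truncFun (s t : ℝ) : ℝ := if |t| ≤ s then t else s * t / |t|

lemma abs_truncFun_le (s t : ℝ) : |truncFun s t| ≤ max |s| |t| := by
  unfold truncFun
  split_ifs with h
  · exact le_max_right _ _
  · by_cases ht : t = 0
    · simp [ht]
    · have hst : abs (s * t / |t|) = |s| := by
        rw [abs_div, abs_mul, abs_abs, mul_div_assoc, div_self (abs_ne_zero.mpr ht), mul_one]
      rw [hst]; exact le_max_left _ _

/-- The truncation of radius `s`: `T_s(x)(γ) = x(γ)` if `|x(γ)| ≤ s`,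
and `= s·x(γ)/|x(γ)|` otherwise. -/
def trunc (s : ℝ) (x : Linf Γ) : Linf Γ :=
  BoundedContinuousFunction.ofNormedAddCommGroup (fun γ => truncFun s (x γ))
    continuous_of_discreteTopology (max |s| ‖x‖) (fun γ => by
      rw [Real.norm_eq_abs]
      exact (abs_truncFun_le s (x γ)).trans
        (max_le_max le_rfl (by simpa using x.norm_coe_le_norm γ)))

/-- The restriction operator `r_S : ℓ∞(Γ) → ℓ∞(S)`, where `ℓ∞(S)` is identified
isometrically with the subspace of `ℓ∞(Γ)` of functions vanishing off `S`. -/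
def restr (S : Set Γ) (x : Linf Γ) : Linf Γ :=
  BoundedContinuousFunction.ofNormedAddCommGroup (S.indicator x)
    continuous_of_discreteTopology ‖x‖ (fun γ => by
      rw [Real.norm_eq_abs]
      by_cases h : γ ∈ S
      · rw [Set.indicator_of_mem h]
        simpa using x.norm_coe_le_norm γ
      · rw [Set.indicator_of_notMem h]
        simp)

/-- The ball `s·B_{ℓ∞(S)}`, viewed inside `ℓ∞(Γ)`: functions supported on `S`
of norm at most `s`. -/
def suppBall (S : Set Γ) (s : ℝ) : Set (Linf Γ) :=
  {x | (∀ γ ∉ S, x γ = 0) ∧ ‖x‖ ≤ s}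

/-- `chain T a b = T (a+1) ∘ ⋯ ∘ T b` (the identity if `b ≤ a`). -/
def chain {α : Type*} (T : ℕ → α → α) (a b : ℕ) : α → α :=
  Nat.rec id (fun k ih => ih ∘ T (a + k + 1)) (b - a)

/-- Bourgain–Delbaen data on `Γ`: a strictly increasing sequence of nonempty finite
sets `Γs n` (for `n ≥ 1`) with union `Γ`, together with compatible bounded linear
extension operators `i n : ℓ∞(Γ_n) → ℓ∞(Γ)` (realized as operators on `ℓ∞(Γ)`
factoring through the restriction `restr (Γs n)`), with norms bounded by the
positive integer `lam`. -/
structure BD (Γ : Type*) [TopologicalSpace Γ] [DiscreteTopology Γ] where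
  Γs : ℕ → Set Γ
  lam : ℕ
  i : ℕ → Linf Γ →L[ℝ] Linf Γ
  one_le_lam : 1 ≤ lam
  finite : ∀ n, 1 ≤ n → (Γs n).Finite
  nonempty : ∀ n, 1 ≤ n → (Γs n).Nonempty
  ssubset : ∀ n, 1 ≤ n → Γs n ⊂ Γs (n + 1)
  iUnion_eq : ⋃ n ∈ {k : ℕ | 1 ≤ k}, Γs n = Set.univ
  extension : ∀ n, 1 ≤ n → ∀ x : Linf Γ, ∀ γ ∈ Γs n, i n x γ = x γ
  factor : ∀ n, 1 ≤ n → ∀ x : Linf Γ, i n (restr (Γs n) x) = i n x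
  compatible : ∀ n m, 1 ≤ n → n < m → ∀ x : Linf Γ, i m (restr (Γs m) (i n x)) = i n x
  norm_i_le : ∀ n, 1 ≤ n → ‖i n‖ ≤ (lam : ℝ)

namespace BD

/-- `s n = λ^n`. -/
def s (B : BD Γ) (n : ℕ) : ℝ := (B.lam : ℝ) ^ n

/-- The sets `M_n` (with `M_0 = ∅`):
`M_n = M_{n-1} ∪ (f ∘ i_n)(f(s_n B_{ℓ∞(Γ_n)}) \ r_n(M_{n-1}))`. -/
def M (B : BD Γ) : ℕ → Set (Linf Γ)
  | 0 => ∅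
  | n + 1 =>
      M B n ∪
        (fun z => quant (B.i (n + 1) z)) ''
          (quant '' suppBall (B.Γs (n + 1)) (B.s (n + 1)) \ restr (B.Γs (n + 1)) '' M B n)

/-- `M = ⋃ n, M_n`. -/
def Mtot (B : BD Γ) : Set (Linf Γ) := ⋃ n, B.M n

/-- `C_n = (f ∘ i_{n+1} ∘ f ∘ T_{s_{n+1}} ∘ r_{n+1} ∘ i_n)
(f(s_{n+1}B_{ℓ∞(Γ_n)}) \ f(s_n B_{ℓ∞(Γ_n)}))`. -/
def C (B : BD Γ) (n : ℕ) : Set (Linf Γ) :=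
  (fun z => quant (B.i (n + 1) (quant (trunc (B.s (n + 1)) (restr (B.Γs (n + 1)) (B.i n z)))))) ''
    (quant '' suppBall (B.Γs n) (B.s (n + 1)) \ quant '' suppBall (B.Γs n) (B.s n))

/-- `D_n = M_n ∪ C_n`. -/
def D (B : BD Γ) (n : ℕ) : Set (Linf Γ) := B.M n ∪ B.C n

end BD

section Quantization

lemma ent_intCast (z : ℤ) : ent (z : ℝ) = z := by
  rw [ent, Real.sign_intCast, ← Int.cast_abs, Int.floor_intCast, ← Int.cast_mul, Int.sign_mul_abs]

def IsIntValued (w : Linf Γ) : Prop := ∀ γ, ∃ z : ℤ, w γ = z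

lemma isIntValued_quant (x : Linf Γ) : IsIntValued (quant x) := fun γ => by
  change ∃ z : ℤ, ent (x γ) = z
  rcases Real.sign_apply_eq (x γ) with h | h | h <;> rw [ent, h]
  exacts [⟨-⌊|x γ|⌋, by push_cast; ring⟩, ⟨0, by simp⟩, ⟨⌊|x γ|⌋, by simp⟩]

lemma IsIntValued.quant_eq {w : Linf Γ} (hw : IsIntValued w) : quant w = w := by
  ext γ
  obtain ⟨z, hz⟩ := hw γ
  change ent (w γ) = w γ
  rw [hz, ent_intCast]

lemma IsIntValued.add {u v : Linf Γ} (hu : IsIntValued u) (hv : IsIntValued v) :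
    IsIntValued (u + v) := fun γ => by
  obtain ⟨a, ha⟩ := hu γ
  obtain ⟨b, hb⟩ := hv γ
  exact ⟨a + b, by simp [ha, hb]⟩

lemma IsIntValued.norm_eq_floor {w : Linf Γ} (hw : IsIntValued w) : ‖w‖ = ⌊‖w‖⌋₊ := by
  refine le_antisymm ((BoundedContinuousFunction.norm_le (Nat.cast_nonneg _)).mpr fun γ => ?_)
    (Nat.floor_le (norm_nonneg w))
  obtain ⟨z, hz⟩ := hw γ
  have hz_abs : ((z.natAbs : ℕ) : ℝ) = ‖w γ‖ := by
    rw [hz, Nat.cast_natAbs, Int.cast_abs, Real.norm_eq_abs]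
  rw [← hz_abs]
  exact_mod_cast Nat.le_floor (hz_abs ▸ w.norm_coe_le_norm γ)

lemma quant_apply_eq_zero {x : Linf Γ} {γ : Γ} (h : x γ = 0) : quant x γ = 0 := by
  change ent (x γ) = 0
  simp [h, ent]

lemma norm_quant_le (x : Linf Γ) : ‖quant x‖ ≤ ‖x‖ :=
  (BoundedContinuousFunction.norm_le (norm_nonneg x)).mpr fun γ => by
    rw [Real.norm_eq_abs]
    exact (abs_ent_le (x γ)).trans (by simpa using x.norm_coe_le_norm γ)

lemma mem_quant_image_suppBall_iff {S : Set Γ} {s : ℝ} {g : Linf Γ} :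
    g ∈ quant '' suppBall S s ↔ IsIntValued g ∧ (∀ γ ∉ S, g γ = 0) ∧ ‖g‖ ≤ s := by
  constructor
  · rintro ⟨v, ⟨hv, hvs⟩, rfl⟩
    exact ⟨isIntValued_quant v, fun γ hγ => quant_apply_eq_zero (hv γ hγ),
      (norm_quant_le v).trans hvs⟩
  · rintro ⟨hg, hsupp, hgs⟩
    exact ⟨g, ⟨hsupp, hgs⟩, hg.quant_eq⟩

lemma mem_quant_image_supported_iff {S : Set Γ} {g : Linf Γ} :
    g ∈ quant '' {z : Linf Γ | ∀ γ ∉ S, z γ = 0} ↔ IsIntValued g ∧ ∀ γ ∉ S, g γ = 0 := by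
  constructor
  · rintro ⟨v, hv, rfl⟩
    exact ⟨isIntValued_quant v, fun γ hγ => quant_apply_eq_zero (hv γ hγ)⟩
  · rintro ⟨hg, hsupp⟩
    exact ⟨g, hsupp, hg.quant_eq⟩

end Quantization

section Truncation

lemma truncFun_zero (s : ℝ) : truncFun s 0 = 0 := by
  simp [truncFun]

lemma trunc_zero (s : ℝ) : trunc s (0 : Linf Γ) = 0 := by
  ext γ
  exact truncFun_zero s

lemma norm_trunc_le {s : ℝ} (hs : 0 ≤ s) (x : Linf Γ) : ‖trunc s x‖ ≤ s :=
  (BoundedContinuousFunction.norm_le hs).mpr fun γ => by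
    change |truncFun s (x γ)| ≤ s
    unfold truncFun
    split_ifs with h
    · exact h
    · rcases eq_or_ne (x γ) 0 with h0 | h0
      · simp [h0, hs]
      · rw [abs_div, abs_mul, abs_abs, abs_of_nonneg hs,
          mul_div_cancel_right₀ _ (abs_ne_zero.mpr h0)]

lemma truncFun_intCast (a b : ℤ) : ∃ c : ℤ, truncFun a b = c := by
  unfold truncFun
  split_ifs
  · exact ⟨b, rfl⟩
  · rcases lt_trichotomy b 0 with hb | rfl | hb
    · refine ⟨-a, ?_⟩
      rw [abs_of_neg (by exact_mod_cast hb), mul_div_assoc, div_neg,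
        div_self (by exact_mod_cast hb.ne)]
      push_cast; ring
    · exact ⟨0, by simp⟩
    · refine ⟨a, ?_⟩
      rw [abs_of_pos (by exact_mod_cast hb), mul_div_assoc, div_self (by exact_mod_cast hb.ne'),
        mul_one]

lemma IsIntValued.trunc {w : Linf Γ} (hw : IsIntValued w) (a : ℤ) : IsIntValued (trunc a w) :=
  fun γ => by
    obtain ⟨b, hb⟩ := hw γ
    change ∃ c : ℤ, truncFun a (w γ) = c
    rw [hb]
    exact truncFun_intCast a b

lemma abs_add_truncFun_le {s : ℝ} (hs : 0 ≤ s) (a t : ℝ) :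
    |a + truncFun s t| ≤ max |a| |a + t| := by
  unfold truncFun
  split_ifs with h
  · exact le_max_right _ _
  · push Not at h
    rcases lt_or_gt_of_ne (show t ≠ 0 by rintro rfl; rw [abs_zero] at h; linarith) with ht | ht
    · rw [abs_of_neg ht, mul_div_assoc, div_neg, div_self ht.ne, max_comm]
      rw [abs_of_neg ht] at h
      exact abs_le_max_abs_abs (by linarith) (by linarith)
    · rw [abs_of_pos ht, mul_div_assoc, div_self ht.ne', mul_one]
      rw [abs_of_pos ht] at h
      exact abs_le_max_abs_abs (by linarith) (by linarith)

end Truncation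

section Restriction

variable {S S' : Set Γ}

lemma restr_apply_of_mem (x : Linf Γ) {γ : Γ} (h : γ ∈ S) : restr S x γ = x γ :=
  Set.indicator_of_mem h x

lemma restr_apply_of_notMem (x : Linf Γ) {γ : Γ} (h : γ ∉ S) : restr S x γ = 0 :=
  Set.indicator_of_notMem h x

lemma norm_restr_le (x : Linf Γ) : ‖restr S x‖ ≤ ‖x‖ :=
  (BoundedContinuousFunction.norm_le (norm_nonneg x)).mpr fun γ => by
    by_cases hγ : γ ∈ S
    · rw [restr_apply_of_mem x hγ]; exact x.norm_coe_le_norm γ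
    · rw [restr_apply_of_notMem x hγ, norm_zero]; exact norm_nonneg x

lemma norm_restr_le_of_abs_le {x : Linf Γ} {c : ℝ} (hc : 0 ≤ c) (h : ∀ γ ∈ S, |x γ| ≤ c) :
    ‖restr S x‖ ≤ c :=
  (BoundedContinuousFunction.norm_le hc).mpr fun γ => by
    by_cases hγ : γ ∈ S
    · rw [restr_apply_of_mem x hγ]; exact h γ hγ
    · rw [restr_apply_of_notMem x hγ, norm_zero]; exact hc

lemma restr_restr_of_subset (h : S ⊆ S') (x : Linf Γ) : restr S (restr S' x) = restr S x := by
  ext γ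
  by_cases hγ : γ ∈ S
  · rw [restr_apply_of_mem _ hγ, restr_apply_of_mem _ hγ, restr_apply_of_mem _ (h hγ)]
  · rw [restr_apply_of_notMem _ hγ, restr_apply_of_notMem _ hγ]

lemma restr_add_restr_diff (h : S ⊆ S') (x : Linf Γ) :
    restr S x + restr (S' \ S) x = restr S' x := by
  ext γ
  change S.indicator x γ + (S' \ S).indicator x γ = S'.indicator x γ
  rw [← congrFun (Set.indicator_union_of_disjoint Set.disjoint_sdiff_right x) γ,
    Set.union_sdiff_cancel h]

lemma IsIntValued.restr {u : Linf Γ} (hu : IsIntValued u) (S : Set Γ) :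
    IsIntValued (restr S u) := fun γ => by
  by_cases hγ : γ ∈ S
  · rw [restr_apply_of_mem u hγ]; exact hu γ
  · exact ⟨0, by rw [restr_apply_of_notMem u hγ, Int.cast_zero]⟩

lemma restr_mem_quant_image_suppBall {s : ℝ} {g : Linf Γ} (hg : g ∈ quant '' suppBall S' s)
    (S : Set Γ) : restr S g ∈ quant '' suppBall S s := by
  obtain ⟨hint, -, hnorm⟩ := mem_quant_image_suppBall_iff.mp hg
  exact mem_quant_image_suppBall_iff.mpr
    ⟨hint.restr S, fun γ hγ => restr_apply_of_notMem g hγ, (norm_restr_le g).trans hnorm⟩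

lemma add_trunc_mem_quant_image_suppBall {s : ℝ} {a w : Linf Γ}
    (ha : a ∈ quant '' suppBall S s) (haw : a + w ∈ quant '' suppBall S s)
    (hw : IsIntValued w) (htw : IsIntValued (trunc (‖w‖ - 1) w)) :
    a + trunc (‖w‖ - 1) w ∈ quant '' suppBall S s := by
  obtain ⟨ha_int, ha_supp, ha_norm⟩ := mem_quant_image_suppBall_iff.mp ha
  obtain ⟨-, haw_supp, haw_norm⟩ := mem_quant_image_suppBall_iff.mp haw
  have hs : 0 ≤ s := (norm_nonneg a).trans ha_norm
  refine mem_quant_image_suppBall_iff.mpr ⟨ha_int.add htw, fun γ hγ => ?_,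
    (BoundedContinuousFunction.norm_le hs).mpr fun γ => ?_⟩
  · have hwγ : w γ = 0 := by simpa [ha_supp γ hγ] using haw_supp γ hγ
    change a γ + truncFun _ (w γ) = 0
    rw [hwγ, truncFun_zero, ha_supp γ hγ, add_zero]
  · change |a γ + truncFun _ (w γ)| ≤ s
    rcases eq_or_ne (w γ) 0 with h0 | h0
    · rw [h0, truncFun_zero, add_zero]
      exact (a.norm_coe_le_norm γ).trans ha_norm
    obtain ⟨z, hz⟩ := hw γ
    have hlevel : 0 ≤ ‖w‖ - 1 := by
      have h1 : (1 : ℝ) ≤ |w γ| := by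
        rw [hz]; exact_mod_cast Int.one_le_abs (by rintro rfl; simp [hz] at h0)
      linarith [w.norm_coe_le_norm γ, Real.norm_eq_abs (w γ)]
    refine (abs_add_truncFun_le hlevel _ _).trans (max_le ?_ ?_)
    · exact (a.norm_coe_le_norm γ).trans ha_norm
    · exact ((a + w).norm_coe_le_norm γ).trans haw_norm

end Restriction

section Chain

variable {α : Type*} (f : ℕ → α → α)

lemma chain_eq_id_of_le {a b : ℕ} (h : b ≤ a) : chain f a b = id := by
  rw [chain, Nat.sub_eq_zero_of_le h]
  rfl

lemma chain_succ_right {a b : ℕ} (h : a ≤ b) : chain f a (b + 1) = chain f a b ∘ f (b + 1) := by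
  rw [chain, chain, show b + 1 - a = b - a + 1 by omega]
  change _ ∘ f (a + (b - a) + 1) = _
  rw [Nat.add_sub_cancel' h]

lemma chain_comp {a b c : ℕ} (hab : a ≤ b) (hbc : b ≤ c) :
    chain f a b ∘ chain f b c = chain f a c := by
  induction c, hbc using Nat.le_induction with
  | base => rw [chain_eq_id_of_le f le_rfl, Function.comp_id]
  | succ c hbc ih =>
    rw [chain_succ_right f hbc, ← Function.comp_assoc, ih, chain_succ_right f (hab.trans hbc)]

lemma chain_succ_left {a c : ℕ} (h : a < c) : chain f a c = f (a + 1) ∘ chain f (a + 1) c := by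
  rw [← chain_comp f a.le_succ h, chain_succ_right f le_rfl, chain_eq_id_of_le f le_rfl,
    Function.id_comp]

lemma chain_apply_eq_self {a b : ℕ} {z : α} (h : ∀ t, a < t → t ≤ b → f t z = z) :
    chain f a b z = z := by
  rcases le_or_gt a b with hab | hba
  · induction b, hab using Nat.le_induction with
    | base => rw [chain_eq_id_of_le f le_rfl, id]
    | succ b hab ih =>
      rw [chain_succ_right f hab, Function.comp_apply, h (b + 1) (by omega) le_rfl,
        ih fun t ht htb => h t ht (by omega)]
  · rw [chain_eq_id_of_le f hba.le, id]

end Chain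

section LexThreshold

/-- The largest `j` with `(j, k) ≤ p` lexicographically, provided `1 ≤ p.1`; the truncation level
`M(i₁, i₂)` of the paper is `m(j₂, lexThreshold k₂ e_{i₁})`. -/
def lexThreshold (k : ℕ) (p : ℕ × ℕ) : ℕ := if k ≤ p.2 then p.1 else p.1 - 1

lemma toLex_le_iff_le_lexThreshold {j k : ℕ} {p : ℕ × ℕ} (hp : 1 ≤ p.1) :
    toLex (j, k) ≤ toLex p ↔ j ≤ lexThreshold k p := by
  rw [Prod.Lex.toLex_le_toLex, lexThreshold]
  split_ifs <;> omega

lemma lexThreshold_mono {k : ℕ} {p q : ℕ × ℕ} (h : toLex p ≤ toLex q) :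
    lexThreshold k p ≤ lexThreshold k q := by
  rw [Prod.Lex.toLex_le_toLex] at h
  unfold lexThreshold
  split_ifs <;> omega

lemma lexThreshold_self (p : ℕ × ℕ) : lexThreshold p.2 p = p.1 := if_pos le_rfl

end LexThreshold

lemma exists_lt_eq_trunc_norm_sub_one {S : Set Γ} {y : ℕ → Linf Γ} (hy0 : y 0 = 0)
    (hy_range : Set.range y = quant '' {z : Linf Γ | ∀ γ ∉ S, z γ = 0})
    (hy_mono : Monotone fun j => ‖y j‖) {κ : ℕ} (hκ : 1 ≤ κ) :
    ∃ κ' < κ, y κ' = trunc (‖y κ‖ - 1) (y κ) := by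
  by_cases hzero : y κ = 0
  · exact ⟨0, hκ, by rw [hy0, hzero, trunc_zero]⟩
  obtain ⟨hint, hsupp⟩ := mem_quant_image_supported_iff.mp (hy_range ▸ Set.mem_range_self κ)
  have hnorm : (1 : ℝ) ≤ ‖y κ‖ := by
    have hpos := norm_pos_iff.mpr hzero
    rw [hint.norm_eq_floor] at hpos ⊢
    exact_mod_cast Nat.cast_pos.mp hpos
  have htrunc_int : IsIntValued (trunc (‖y κ‖ - 1) (y κ)) := by
    have := hint.trunc (⌊‖y κ‖⌋₊ - 1 : ℤ)
    rwa [Int.cast_sub, Int.cast_natCast, Int.cast_one, ← hint.norm_eq_floor] at this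
  have hmem : trunc (‖y κ‖ - 1) (y κ) ∈ Set.range y := by
    rw [hy_range]
    refine mem_quant_image_supported_iff.mpr ⟨htrunc_int, fun γ hγ => ?_⟩
    change truncFun _ (y κ γ) = 0
    rw [hsupp γ hγ, truncFun_zero]
  obtain ⟨κ', hκ'⟩ := hmem
  refine ⟨κ', lt_of_not_ge fun hle => ?_, hκ'⟩
  have := (hy_mono hle).trans (hκ' ▸ norm_trunc_le (by linarith) (y κ))
  linarith

namespace BD

variable (B : BD Γ)

lemma s_nonneg (n : ℕ) : 0 ≤ B.s n := pow_nonneg (Nat.cast_nonneg _) n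

lemma s_mono {a b : ℕ} (h : a ≤ b) : B.s a ≤ B.s b :=
  pow_le_pow_right₀ (by exact_mod_cast B.one_le_lam) h

lemma restr_quant_i {m : ℕ} (hm : 1 ≤ m) {z : Linf Γ} (hz : IsIntValued z)
    (hsupp : ∀ γ ∉ B.Γs m, z γ = 0) : restr (B.Γs m) (quant (B.i m z)) = z := by
  ext γ
  by_cases hγ : γ ∈ B.Γs m
  · rw [restr_apply_of_mem _ hγ]
    change ent (B.i m z γ) = z γ
    obtain ⟨c, hc⟩ := hz γ
    rw [B.extension m hm z γ hγ, hc, ent_intCast]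
  · rw [restr_apply_of_notMem _ hγ, hsupp γ hγ]

def newM (m : ℕ) : Set (Linf Γ) :=
  (fun z => quant (B.i m z)) ''
    (quant '' suppBall (B.Γs m) (B.s m) \ restr (B.Γs m) '' B.M (m - 1))

lemma M_succ (N : ℕ) : B.M (N + 1) = B.M N ∪ B.newM (N + 1) := rfl

lemma M_mono {a b : ℕ} (h : a ≤ b) : B.M a ⊆ B.M b := by
  induction b, h using Nat.le_induction with
  | base => exact subset_rfl
  | succ b _ ih => exact ih.trans (B.M_succ b ▸ Set.subset_union_left)

lemma restr_mem_of_mem_newM {m : ℕ} (hm : 1 ≤ m) {u : Linf Γ} (hu : u ∈ B.newM m) :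
    restr (B.Γs m) u ∈ quant '' suppBall (B.Γs m) (B.s m) \ restr (B.Γs m) '' B.M (m - 1) ∧
      quant (B.i m (restr (B.Γs m) u)) = u := by
  obtain ⟨z, hz, rfl⟩ := hu
  obtain ⟨hint, hsupp, -⟩ := mem_quant_image_suppBall_iff.mp hz.1
  rw [B.restr_quant_i hm hint hsupp]
  exact ⟨hz, rfl⟩

lemma abs_apply_le_of_mem_newM {m N : ℕ} (hm : 1 ≤ m) (hmN : m ≤ N) {u : Linf Γ}
    (hu : u ∈ B.newM m) {γ : Γ} (hγ : γ ∈ B.Γs N) : |u γ| ≤ B.s N := by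
  obtain ⟨⟨hball, -⟩, hrep⟩ := B.restr_mem_of_mem_newM hm hu
  have hr := (mem_quant_image_suppBall_iff.mp hball).2.2
  rcases hmN.eq_or_lt with rfl | hlt
  · rw [← restr_apply_of_mem u hγ]
    exact ((restr _ u).norm_coe_le_norm γ).trans hr
  · calc |u γ| ≤ ‖u‖ := u.norm_coe_le_norm γ
      _ = ‖quant (B.i m (restr (B.Γs m) u))‖ := by rw [hrep]
      _ ≤ ‖B.i m (restr (B.Γs m) u)‖ := norm_quant_le _
      _ ≤ B.lam * B.s m := (B.i m).le_of_opNorm_le_of_le (B.norm_i_le m hm) hr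
      _ = B.s (m + 1) := by rw [s, s, pow_succ, mul_comm]
      _ ≤ B.s N := B.s_mono hlt

lemma abs_apply_le_of_mem_M {N N' : ℕ} (hN : N ≤ N') {u : Linf Γ} (hu : u ∈ B.M N) {γ : Γ}
    (hγ : γ ∈ B.Γs N') : |u γ| ≤ B.s N' := by
  induction N with
  | zero => exact absurd hu (Set.notMem_empty u)
  | succ N ih =>
    rcases hu with hu | hu
    · exact ih (by omega) hu
    · exact B.abs_apply_le_of_mem_newM (by omega) hN hu hγ

lemma isIntValued_of_mem_M {N : ℕ} {u : Linf Γ} (hu : u ∈ B.M N) : IsIntValued u := by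
  induction N with
  | zero => exact absurd hu (Set.notMem_empty u)
  | succ N ih =>
    rcases hu with hu | ⟨z, -, rfl⟩
    · exact ih hu
    · exact isIntValued_quant _

lemma injOn_restr_M (N : ℕ) : Set.InjOn (restr (B.Γs N)) (B.M N) := by
  induction N with
  | zero => exact Set.injOn_empty _
  | succ N ih =>
    have hnew : ∀ u ∈ B.M N, ∀ u' ∈ B.newM (N + 1),
        restr (B.Γs (N + 1)) u ≠ restr (B.Γs (N + 1)) u' :=
      fun u hu u' hu' h => (B.restr_mem_of_mem_newM (by omega) hu').1.2 ⟨u, hu, h⟩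
    rintro u (hu | hu) u' (hu' | hu') h
    · have hN : 1 ≤ N := Nat.one_le_iff_ne_zero.mpr (by rintro rfl; exact hu)
      refine ih hu hu' ?_
      rw [← restr_restr_of_subset (B.ssubset N hN).subset u, h,
        restr_restr_of_subset (B.ssubset N hN).subset]
    · exact absurd h (hnew u hu u' hu')
    · exact absurd h.symm (hnew u' hu' u hu)
    · rw [← (B.restr_mem_of_mem_newM (by omega) hu).2, h,
        (B.restr_mem_of_mem_newM (by omega) hu').2]

lemma restr_of_mem_C {n : ℕ} (hn : 1 ≤ n) {v : Linf Γ} (hv : v ∈ B.C n) :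
    restr (B.Γs (n + 1)) v ∈ quant '' suppBall (B.Γs (n + 1)) (B.s (n + 1)) ∧
      quant (B.i (n + 1) (restr (B.Γs (n + 1)) v)) = v ∧ B.s n < ‖restr (B.Γs n) v‖ := by
  obtain ⟨z, ⟨hz, hz_large⟩, rfl⟩ := hv
  obtain ⟨hz_int, hz_supp, hz_norm⟩ := mem_quant_image_suppBall_iff.mp hz
  set w := quant (trunc (B.s (n + 1)) (restr (B.Γs (n + 1)) (B.i n z)))
  have hw : w ∈ quant '' suppBall (B.Γs (n + 1)) (B.s (n + 1)) := by
    refine ⟨_, ⟨fun γ hγ => ?_, norm_trunc_le (B.s_nonneg _) _⟩, rfl⟩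
    change truncFun _ (restr _ _ γ) = 0
    rw [restr_apply_of_notMem _ hγ, truncFun_zero]
  obtain ⟨hw_int, hw_supp, -⟩ := mem_quant_image_suppBall_iff.mp hw
  have hrestr : restr (B.Γs (n + 1)) (quant (B.i (n + 1) w)) = w :=
    B.restr_quant_i (by omega) hw_int hw_supp
  refine ⟨hrestr ▸ hw, by rw [hrestr], ?_⟩
  have hz_eq : restr (B.Γs n) w = z := by
    ext γ
    by_cases hγ : γ ∈ B.Γs n
    · rw [restr_apply_of_mem _ hγ]
      change ent (truncFun _ (restr _ (B.i n z) γ)) = z γ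
      obtain ⟨c, hc⟩ := hz_int γ
      have hzγ : |z γ| ≤ B.s (n + 1) := (z.norm_coe_le_norm γ).trans hz_norm
      rw [restr_apply_of_mem _ ((B.ssubset n hn).subset hγ), B.extension n hn z γ hγ, truncFun,
        if_pos hzγ, hc, ent_intCast]
    · rw [restr_apply_of_notMem _ hγ, hz_supp γ hγ]
  rw [← restr_restr_of_subset (B.ssubset n hn).subset, hrestr, hz_eq]
  by_contra! hle
  exact hz_large (mem_quant_image_suppBall_iff.mpr ⟨hz_int, hz_supp, hle⟩)

lemma injOn_restr_M_union_C {n : ℕ} (hn : 1 ≤ n) :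
    Set.InjOn (restr (B.Γs (n + 1))) (B.M (n + 1) ∪ B.C n) := by
  have hMC : ∀ u ∈ B.M (n + 1), ∀ v ∈ B.C n,
      restr (B.Γs (n + 1)) u = restr (B.Γs (n + 1)) v → u = v := by
    intro u hu v hv h
    obtain ⟨-, hv_rep, hv_norm⟩ := B.restr_of_mem_C hn hv
    rcases hu with hu | hu
    · -- on `Γs n`, the points of `M n` are bounded by `s n`, those of `C n` are not
      refine absurd (norm_restr_le_of_abs_le (B.s_nonneg n)
        fun γ hγ => B.abs_apply_le_of_mem_M le_rfl hu hγ) (not_le.mpr ?_)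
      rwa [← restr_restr_of_subset (B.ssubset n hn).subset u, h,
        restr_restr_of_subset (B.ssubset n hn).subset]
    · rw [← (B.restr_mem_of_mem_newM (by omega) hu).2, h, hv_rep]
  rintro u (hu | hu) u' (hu' | hu') h
  · exact B.injOn_restr_M (n + 1) hu hu' h
  · exact hMC u hu u' hu' h
  · exact (hMC u' hu' u hu h.symm).symm
  · rw [← (B.restr_of_mem_C hn hu).2.1, h, (B.restr_of_mem_C hn hu').2.1]

lemma restr_mem_of_mem_D {n : ℕ} (hn : 1 ≤ n) {v : Linf Γ} (hv : v ∈ B.D n) :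
    restr (B.Γs (n + 1)) v ∈ quant '' suppBall (B.Γs (n + 1)) (B.s (n + 1)) := by
  rcases hv with hv | hv
  · exact mem_quant_image_suppBall_iff.mpr ⟨(B.isIntValued_of_mem_M hv).restr _,
      fun γ hγ => restr_apply_of_notMem v hγ, norm_restr_le_of_abs_le (B.s_nonneg _)
        fun γ hγ => B.abs_apply_le_of_mem_M n.le_succ hv hγ⟩
  · exact (B.restr_of_mem_C hn hv).1

lemma D_subset (n : ℕ) : B.D n ⊆ B.M (n + 1) ∪ B.C n :=
  Set.union_subset_union_left _ (B.M_mono n.le_succ)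

end BD

structure PsiSetup (B : BD Γ) (n : ℕ) (y : ℕ → Linf Γ) (kn : ℕ) (d : ℕ → Linf Γ) (I : ℕ)
    (e : ℕ → ℕ × ℕ) (x : ℕ → Linf Γ) (ψ T : ℕ → Linf Γ → Linf Γ) : Prop where
  two_le : 2 ≤ n
  y_zero : y 0 = 0
  range_y : Set.range y = quant '' {z : Linf Γ | ∀ γ ∉ B.Γs n \ B.Γs (n - 1), z γ = 0}
  norm_y_mono : ∀ j₁ j₂, j₁ ≤ j₂ → ‖y j₁‖ ≤ ‖y j₂‖
  image_d : d '' Set.Icc 1 kn = B.D (n - 1)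
  e_mem : ∀ i, 1 ≤ i → i ≤ I → 1 ≤ (e i).1 ∧ 1 ≤ (e i).2 ∧ (e i).2 ≤ kn ∧
    restr (B.Γs n \ B.Γs (n - 1)) (d (e i).2) + y (e i).1 ∈
      quant '' suppBall (B.Γs n \ B.Γs (n - 1)) (B.s n)
  e_surj : ∀ p : ℕ × ℕ, 1 ≤ p.1 → 1 ≤ p.2 → p.2 ≤ kn →
    restr (B.Γs n \ B.Γs (n - 1)) (d p.2) + y p.1 ∈
      quant '' suppBall (B.Γs n \ B.Γs (n - 1)) (B.s n) →
    ∃ i, 1 ≤ i ∧ i ≤ I ∧ e i = p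
  e_lex : ∀ i₁ i₂, 1 ≤ i₁ → i₁ < i₂ → i₂ ≤ I →
    (e i₁).1 < (e i₂).1 ∨ ((e i₁).1 = (e i₂).1 ∧ (e i₁).2 < (e i₂).2)
  x_spec : ∀ i, 1 ≤ i → i ≤ I → x i ∈ B.M n ∧
    restr (B.Γs n) (x i) =
      restr (B.Γs (n - 1)) (d (e i).2) + restr (B.Γs n \ B.Γs (n - 1)) (d (e i).2) + y (e i).1
  ψ_x_spec : ∀ i, 1 ≤ i → i ≤ I → ψ i (x i) ∈ B.M n ∧
    restr (B.Γs n) (ψ i (x i)) =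
      restr (B.Γs (n - 1)) (d (e i).2) + restr (B.Γs n \ B.Γs (n - 1)) (d (e i).2) +
        trunc (‖y (e i).1‖ - 1) (y (e i).1)
  ψ_eq_self : ∀ i, 1 ≤ i → i ≤ I → ∀ z ∈ B.D (n - 1) ∪ x '' Set.Icc 1 (i - 1), ψ i z = z
  T_y_self : ∀ j, 1 ≤ j → T j (y j) = trunc (‖y j‖ - 1) (y j)
  T_y_of_lt : ∀ j k, k < j → T j (y k) = y k

/-- The invariant of the descent from `x i₂`: `z` is the point of the column `(e i₂).2` at the
height `κ` reached by the retractions `T` from `(e i₂).1` down to the threshold of `e i`. -/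
def ColumnState (B : BD Γ) (n : ℕ) (y d : ℕ → Linf Γ) (e : ℕ → ℕ × ℕ)
    (T : ℕ → Linf Γ → Linf Γ) (i₂ i : ℕ) (z : Linf Γ) : Prop :=
  ∃ κ, chain T (lexThreshold (e i₂).2 (e i)) (e i₂).1 (y (e i₂).1) = y κ ∧ z ∈ B.M n ∧
    restr (B.Γs n) z = restr (B.Γs n) (d (e i₂).2) + y κ ∧
    (1 ≤ κ → ∃ i' ∈ Set.Icc 1 i, e i' = (κ, (e i₂).2))

namespace PsiSetup

variable {B : BD Γ} {n : ℕ} {y : ℕ → Linf Γ} {kn : ℕ} {d : ℕ → Linf Γ} {I : ℕ}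
  {e : ℕ → ℕ × ℕ} {x : ℕ → Linf Γ} {ψ T : ℕ → Linf Γ → Linf Γ}

lemma pred_add_one (h : PsiSetup B n y kn d I e x ψ T) : n - 1 + 1 = n := by
  have := h.two_le; omega

lemma restr_split (h : PsiSetup B n y kn d I e x ψ T) (v : Linf Γ) :
    restr (B.Γs (n - 1)) v + restr (B.Γs n \ B.Γs (n - 1)) v = restr (B.Γs n) v := by
  refine restr_add_restr_diff ?_ v
  have := (B.ssubset (n - 1) (by have := h.two_le; omega)).subset
  rwa [h.pred_add_one] at this

lemma injOn (h : PsiSetup B n y kn d I e x ψ T) :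
    Set.InjOn (restr (B.Γs n)) (B.M n ∪ B.C (n - 1)) := by
  have := B.injOn_restr_M_union_C (n := n - 1) (by have := h.two_le; omega)
  rwa [h.pred_add_one] at this

lemma d_mem_D (h : PsiSetup B n y kn d I e x ψ T) {k : ℕ} (hk : k ∈ Set.Icc 1 kn) :
    d k ∈ B.D (n - 1) :=
  h.image_d ▸ Set.mem_image_of_mem d hk

lemma restr_d_mem (h : PsiSetup B n y kn d I e x ψ T) {k : ℕ} (hk : k ∈ Set.Icc 1 kn) :
    restr (B.Γs n \ B.Γs (n - 1)) (d k) ∈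
      quant '' suppBall (B.Γs n \ B.Γs (n - 1)) (B.s n) := by
  have := B.restr_mem_of_mem_D (by have := h.two_le; omega) (h.d_mem_D hk)
  rw [h.pred_add_one] at this
  rw [← restr_restr_of_subset Set.sdiff_subset]
  exact restr_mem_quant_image_suppBall this _

lemma y_isIntValued (h : PsiSetup B n y kn d I e x ψ T) (j : ℕ) : IsIntValued (y j) :=
  (mem_quant_image_supported_iff.mp (h.range_y ▸ Set.mem_range_self j)).1

lemma eq_d_of_restr_eq (h : PsiSetup B n y kn d I e x ψ T) {z : Linf Γ} (hz : z ∈ B.M n)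
    {k : ℕ} (hk : k ∈ Set.Icc 1 kn) (hzr : restr (B.Γs n) z = restr (B.Γs n) (d k) + y 0) :
    z = d k := by
  refine h.injOn (Or.inl hz) ?_ (by rw [hzr, h.y_zero, add_zero])
  have := B.D_subset (n - 1) (h.d_mem_D hk)
  rwa [h.pred_add_one] at this

lemma eq_x_of_restr_eq (h : PsiSetup B n y kn d I e x ψ T) {z : Linf Γ} (hz : z ∈ B.M n)
    {i : ℕ} (hi : i ∈ Set.Icc 1 I)
    (hzr : restr (B.Γs n) z = restr (B.Γs n) (d (e i).2) + y (e i).1) : z = x i := by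
  obtain ⟨hxM, hxr⟩ := h.x_spec i hi.1 hi.2
  exact h.injOn (Or.inl hz) (Or.inl hxM) (by rw [hzr, hxr, h.restr_split])

lemma le_iff_le_lexThreshold (h : PsiSetup B n y kn d I e x ψ T) {i' i κ k : ℕ}
    (hi' : i' ∈ Set.Icc 1 I) (hi : i ∈ Set.Icc 1 I) (he : e i' = (κ, k)) :
    i' ≤ i ↔ κ ≤ lexThreshold k (e i) := by
  have hmono : StrictMonoOn (toLex ∘ e) (Set.Icc 1 I) := fun a ha b hb hab =>
    Prod.Lex.toLex_lt_toLex.mpr (h.e_lex a b ha.1 hab hb.2)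
  rw [← toLex_le_iff_le_lexThreshold (h.e_mem i hi.1 hi.2).1, ← he]
  exact (hmono.le_iff_le hi' hi).symm

lemma lexThreshold_mono (h : PsiSetup B n y kn d I e x ψ T) {i i' : ℕ} (k : ℕ)
    (hi : 1 ≤ i) (hii' : i ≤ i') (hi' : i' ≤ I) :
    lexThreshold k (e i) ≤ lexThreshold k (e i') := by
  refine _root_.lexThreshold_mono ?_
  rcases hii'.eq_or_lt with rfl | hlt
  · exact le_rfl
  · exact (Prod.Lex.toLex_lt_toLex.mpr (h.e_lex i i' hi hlt hi')).le

lemma exists_psi_x_eq (h : PsiSetup B n y kn d I e x ψ T) {i : ℕ} (hi : i ∈ Set.Icc 1 I) :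
    ∃ κ' < (e i).1, y κ' = trunc (‖y (e i).1‖ - 1) (y (e i).1) ∧ ψ i (x i) ∈ B.M n ∧
      restr (B.Γs n) (ψ i (x i)) = restr (B.Γs n) (d (e i).2) + y κ' ∧
      (1 ≤ κ' → ∃ i₃, 1 ≤ i₃ ∧ i₃ < i ∧ e i₃ = (κ', (e i).2)) := by
  obtain ⟨hj, hk, hkn, hball⟩ := h.e_mem i hi.1 hi.2
  obtain ⟨κ', hκ', htrunc⟩ :=
    exists_lt_eq_trunc_norm_sub_one h.y_zero h.range_y h.norm_y_mono hj
  obtain ⟨hψM, hψr⟩ := h.ψ_x_spec i hi.1 hi.2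
  refine ⟨κ', hκ', htrunc, hψM, by rw [hψr, h.restr_split, htrunc], fun hκ'1 => ?_⟩
  have hball' := add_trunc_mem_quant_image_suppBall (h.restr_d_mem ⟨hk, hkn⟩) hball
    (h.y_isIntValued _) (htrunc ▸ h.y_isIntValued κ')
  rw [← htrunc] at hball'
  obtain ⟨i₃, hi₃, hi₃I, he₃⟩ := h.e_surj (κ', (e i).2) hκ'1 hk hkn hball'
  have hle : i₃ ≤ i := (h.le_iff_le_lexThreshold ⟨hi₃, hi₃I⟩ hi he₃).mpr
    ((lexThreshold_self (e i)).symm ▸ hκ'.le)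
  refine ⟨i₃, hi₃, hle.lt_of_ne ?_, he₃⟩
  rintro rfl
  rw [he₃] at hκ'
  exact lt_irrefl _ hκ'

lemma psi_succ_eq_self (h : PsiSetup B n y kn d I e x ψ T) {i κ k : ℕ} (hi : 1 ≤ i)
    (hiI : i + 1 ≤ I) (hk : k ∈ Set.Icc 1 kn) {z : Linf Γ} (hzM : z ∈ B.M n)
    (hzr : restr (B.Γs n) z = restr (B.Γs n) (d k) + y κ)
    (hidx : 1 ≤ κ → ∃ i' ∈ Set.Icc 1 (i + 1), e i' = (κ, k))
    (hκc : κ ≤ lexThreshold k (e i)) :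
    ψ (i + 1) z = z ∧ (1 ≤ κ → ∃ i' ∈ Set.Icc 1 i, e i' = (κ, k)) := by
  have hidx' : 1 ≤ κ → ∃ i' ∈ Set.Icc 1 i, e i' = (κ, k) := fun hκ => by
    obtain ⟨i', ⟨hi'1, hi'2⟩, he'⟩ := hidx hκ
    exact ⟨i', ⟨hi'1, (h.le_iff_le_lexThreshold ⟨hi'1, hi'2.trans hiI⟩ ⟨hi, by omega⟩ he').mpr
      hκc⟩, he'⟩
  refine ⟨h.ψ_eq_self (i + 1) (by omega) hiI z ?_, hidx'⟩
  rcases Nat.eq_zero_or_pos κ with rfl | hκ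
  · exact Or.inl (h.eq_d_of_restr_eq hzM hk hzr ▸ h.d_mem_D hk)
  · obtain ⟨i', ⟨hi'1, hi'2⟩, he'⟩ := hidx' hκ
    refine Or.inr ⟨i', ⟨hi'1, by omega⟩, ?_⟩
    exact (h.eq_x_of_restr_eq hzM ⟨hi'1, by omega⟩ (by rw [he']; exact hzr)).symm

lemma columnState_psi (h : PsiSetup B n y kn d I e x ψ T) {i₂ i : ℕ} (hi : 1 ≤ i)
    (hii₂ : i < i₂) (hi₂ : i₂ ≤ I) {z : Linf Γ} (hz : ColumnState B n y d e T i₂ (i + 1) z) :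
    ColumnState B n y d e T i₂ i (ψ (i + 1) z) := by
  obtain ⟨κ, hchain, hzM, hzr, hidx⟩ := hz
  set k := (e i₂).2
  have hmem : ∀ {a}, 1 ≤ a → a ≤ i₂ → a ∈ Set.Icc 1 I := fun h1 h2 => ⟨h1, h2.trans hi₂⟩
  have hc : lexThreshold k (e i) ≤ lexThreshold k (e (i + 1)) :=
    h.lexThreshold_mono k hi i.le_succ (by omega)
  have hc₂ : lexThreshold k (e (i + 1)) ≤ (e i₂).1 :=
    lexThreshold_self (e i₂) ▸ h.lexThreshold_mono k (by omega) hii₂ hi₂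
  have hchain' : chain T (lexThreshold k (e i)) (e i₂).1 (y (e i₂).1) =
      chain T (lexThreshold k (e i)) (lexThreshold k (e (i + 1))) (y κ) := by
    rw [← chain_comp T hc hc₂, Function.comp_apply, hchain]
  by_cases hκc : κ ≤ lexThreshold k (e i)
  · have hk := h.e_mem i₂ (by omega) hi₂
    obtain ⟨hfix, hidx'⟩ :=
      h.psi_succ_eq_self hi (by omega) ⟨hk.2.1, hk.2.2.1⟩ hzM hzr hidx hκc
    rw [hfix]
    refine ⟨κ, ?_, hzM, hzr, hidx'⟩
    rw [hchain', chain_apply_eq_self T fun t ht _ => h.T_y_of_lt t κ (by omega)]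
  · -- above the threshold of `e i`, the current point can only be `x (i + 1)` itself
    obtain ⟨i', ⟨hi'1, hi'2⟩, he'⟩ := hidx (by omega)
    obtain rfl : i' = i + 1 := le_antisymm hi'2 (not_le.mp fun hle =>
      hκc ((h.le_iff_le_lexThreshold (hmem hi'1 (by omega)) (hmem hi (by omega)) he').mp hle))
    have hzx : z = x (i + 1) :=
      h.eq_x_of_restr_eq hzM (hmem hi'1 (by omega)) (by rw [he']; exact hzr)
    obtain ⟨κ', hκ'κ, hκ'trunc, hψM, hψr, hidx'⟩ := h.exists_psi_x_eq (hmem hi'1 (by omega))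
    simp only [he'] at hκ'κ hκ'trunc hψr hidx'
    have hidx'' : 1 ≤ κ' → ∃ i₃ ∈ Set.Icc 1 i, e i₃ = (κ', k) := fun hκ' => by
      obtain ⟨i₃, hi₃, hi₃i, he₃⟩ := hidx' hκ'
      exact ⟨i₃, ⟨hi₃, by omega⟩, he₃⟩
    have hκ'c : κ' ≤ lexThreshold k (e i) := by
      rcases Nat.eq_zero_or_pos κ' with h0 | hκ'
      · omega
      · obtain ⟨i₃, ⟨hi₃1, hi₃2⟩, he₃⟩ := hidx'' hκ'
        exact (h.le_iff_le_lexThreshold (hmem hi₃1 (by omega)) (hmem hi (by omega)) he₃).mp hi₃2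
    rw [hzx]
    refine ⟨κ', ?_, hψM, hψr, hidx''⟩
    obtain ⟨m, rfl⟩ : ∃ m, κ = m + 1 := ⟨κ - 1, by omega⟩
    rw [hchain', he', (lexThreshold_self (m + 1, k) : lexThreshold k (m + 1, k) = m + 1),
      chain_succ_right T (by omega), Function.comp_apply, h.T_y_self _ (by omega), ← hκ'trunc,
      chain_apply_eq_self T fun t ht _ => h.T_y_of_lt t κ' (by omega)]

lemma columnState_chain (h : PsiSetup B n y kn d I e x ψ T) {i₁ i₂ : ℕ} (hi₁ : 1 ≤ i₁)
    (h12 : i₁ ≤ i₂) (hi₂ : i₂ ≤ I) :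
    ColumnState B n y d e T i₂ i₁ (chain ψ i₁ I (x i₂)) := by
  refine Nat.decreasingInduction'
    (P := fun i => ColumnState B n y d e T i₂ i (chain ψ i I (x i₂)))
    (fun i hii₂ hi₁i hstate => ?_) h12 ?_
  · rw [chain_succ_left ψ (by omega), Function.comp_apply]
    exact h.columnState_psi (by omega) hii₂ hi₂ hstate
  · obtain ⟨hxM, hxr⟩ := h.x_spec i₂ (by omega) hi₂
    rw [chain_apply_eq_self ψ fun t ht htI =>
      h.ψ_eq_self t (by omega) htI _ (Or.inr ⟨i₂, ⟨by omega, by omega⟩, rfl⟩)]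
    refine ⟨(e i₂).1, ?_, hxM, by rw [hxr, h.restr_split], fun _ => ⟨i₂, ⟨by omega, le_rfl⟩, rfl⟩⟩
    rw [lexThreshold_self, chain_eq_id_of_le T le_rfl, id]

end PsiSetup

theorem Psi_apply_x_general (B : BD Γ) (n : ℕ) (hn : 2 ≤ n)
    (y : ℕ → Linf Γ) (hy0 : y 0 = 0)
    (hyrange : Set.range y =
      quant '' {z : Linf Γ | ∀ γ ∉ B.Γs n \ B.Γs (n - 1), z γ = 0})
    (hymono : ∀ j₁ j₂, j₁ ≤ j₂ → ‖y j₁‖ ≤ ‖y j₂‖)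
    (kn : ℕ) (d : ℕ → Linf Γ)
    (hd_range : d '' Set.Icc 1 kn = B.D (n - 1))
    (I : ℕ) (e : ℕ → ℕ × ℕ)
    (he_mem : ∀ i, 1 ≤ i → i ≤ I → 1 ≤ (e i).1 ∧ 1 ≤ (e i).2 ∧ (e i).2 ≤ kn ∧
      restr (B.Γs n \ B.Γs (n - 1)) (d (e i).2) + y (e i).1 ∈
        quant '' suppBall (B.Γs n \ B.Γs (n - 1)) (B.s n))
    (he_surj : ∀ p : ℕ × ℕ, 1 ≤ p.1 → 1 ≤ p.2 → p.2 ≤ kn →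
      restr (B.Γs n \ B.Γs (n - 1)) (d p.2) + y p.1 ∈
        quant '' suppBall (B.Γs n \ B.Γs (n - 1)) (B.s n) →
      ∃ i, 1 ≤ i ∧ i ≤ I ∧ e i = p)
    (he_lex : ∀ i₁ i₂, 1 ≤ i₁ → i₁ < i₂ → i₂ ≤ I →
      (e i₁).1 < (e i₂).1 ∨ ((e i₁).1 = (e i₂).1 ∧ (e i₁).2 < (e i₂).2))
    (x : ℕ → Linf Γ)
    (hx : ∀ i, 1 ≤ i → i ≤ I → x i ∈ B.M n ∧
      restr (B.Γs n) (x i) =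
        restr (B.Γs (n - 1)) (d (e i).2) +
          restr (B.Γs n \ B.Γs (n - 1)) (d (e i).2) + y (e i).1)
    (ψ : ℕ → Linf Γ → Linf Γ)
    (hψ_val : ∀ i, 1 ≤ i → i ≤ I → ψ i (x i) ∈ B.M n ∧
      restr (B.Γs n) (ψ i (x i)) =
        restr (B.Γs (n - 1)) (d (e i).2) +
          restr (B.Γs n \ B.Γs (n - 1)) (d (e i).2) +
          trunc (‖y (e i).1‖ - 1) (y (e i).1))
    (hψ_id : ∀ i, 1 ≤ i → i ≤ I →
      ∀ z ∈ B.D (n - 1) ∪ x '' Set.Icc 1 (i - 1), ψ i z = z)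
    (T : ℕ → Linf Γ → Linf Γ)
    (hT_val : ∀ j, 1 ≤ j → T j (y j) = trunc (‖y j‖ - 1) (y j))
    (hT_id : ∀ j k, k < j → T j (y k) = y k)
    (mfun : ℕ → ℕ → ℕ)
    (hm : ∀ j' j, j' < j → chain T j' j (y j) = trunc ((mfun j j' : ℕ) : ℝ) (y j))
    (i₁ i₂ : ℕ) (hi₁ : 1 ≤ i₁) (h12 : i₁ < i₂) (hi₂ : i₂ ≤ I) :
    chain ψ i₁ I (x i₂) ∈ B.M n ∧
    restr (B.Γs n) (chain ψ i₁ I (x i₂)) =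
      restr (B.Γs (n - 1)) (d (e i₂).2) +
        restr (B.Γs n \ B.Γs (n - 1)) (d (e i₂).2) +
        trunc (((if (e i₂).2 ≤ (e i₁).2 then mfun (e i₂).1 (e i₁).1
            else mfun (e i₂).1 ((e i₁).1 - 1)) : ℕ) : ℝ) (y (e i₂).1) := by
  have h : PsiSetup B n y kn d I e x ψ T :=
    ⟨hn, hy0, hyrange, hymono, hd_range, he_mem, he_surj, he_lex, hx, hψ_val, hψ_id, hT_val,
      hT_id⟩
  obtain ⟨κ, hchain, hzM, hzr, -⟩ := h.columnState_chain hi₁ h12.le hi₂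
  have hlt : lexThreshold (e i₂).2 (e i₁) < (e i₂).1 := not_le.mp fun hle => h12.not_ge
    ((h.le_iff_le_lexThreshold ⟨by omega, hi₂⟩ ⟨hi₁, by omega⟩ rfl).mpr hle)
  refine ⟨hzM, ?_⟩
  rw [hzr, ← hchain, hm _ _ hlt, h.restr_split, lexThreshold, apply_ite (mfun (e i₂).1)]

/-- Lemma 10 (`lemmamain`): the value of `Ψ_{n,i₁}` at `x_{i₂}` for `i₁ < i₂`,
expressed via the truncation level `M(i₁,i₂)`. -/
theorem Psi_apply_x (B : BD Γ) (n : ℕ) (hn : 2 ≤ n)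
    (y : ℕ → Linf Γ) (hy0 : y 0 = 0) (hyinj : Function.Injective y)
    (hyrange : Set.range y =
      quant '' {z : Linf Γ | ∀ γ ∉ B.Γs n \ B.Γs (n - 1), z γ = 0})
    (hymono : ∀ j₁ j₂, j₁ ≤ j₂ → ‖y j₁‖ ≤ ‖y j₂‖)
    (kn : ℕ) (d : ℕ → Linf Γ)
    (hd_inj : Set.InjOn d (Set.Icc 1 kn))
    (hd_range : d '' Set.Icc 1 kn = B.D (n - 1))
    (I : ℕ) (e : ℕ → ℕ × ℕ)
    (he_mem : ∀ i, 1 ≤ i → i ≤ I → 1 ≤ (e i).1 ∧ 1 ≤ (e i).2 ∧ (e i).2 ≤ kn ∧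
      restr (B.Γs n \ B.Γs (n - 1)) (d (e i).2) + y (e i).1 ∈
        quant '' suppBall (B.Γs n \ B.Γs (n - 1)) (B.s n))
    (he_surj : ∀ p : ℕ × ℕ, 1 ≤ p.1 → 1 ≤ p.2 → p.2 ≤ kn →
      restr (B.Γs n \ B.Γs (n - 1)) (d p.2) + y p.1 ∈
        quant '' suppBall (B.Γs n \ B.Γs (n - 1)) (B.s n) →
      ∃ i, 1 ≤ i ∧ i ≤ I ∧ e i = p)
    (he_lex : ∀ i₁ i₂, 1 ≤ i₁ → i₁ < i₂ → i₂ ≤ I →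
      (e i₁).1 < (e i₂).1 ∨ ((e i₁).1 = (e i₂).1 ∧ (e i₁).2 < (e i₂).2))
    (x : ℕ → Linf Γ)
    (hx : ∀ i, 1 ≤ i → i ≤ I → x i ∈ B.M n ∧
      restr (B.Γs n) (x i) =
        restr (B.Γs (n - 1)) (d (e i).2) +
          restr (B.Γs n \ B.Γs (n - 1)) (d (e i).2) + y (e i).1)
    (hx_range : x '' Set.Icc 1 I = B.M n \ B.D (n - 1))
    (ψ : ℕ → Linf Γ → Linf Γ)
    (hψ_val : ∀ i, 1 ≤ i → i ≤ I → ψ i (x i) ∈ B.M n ∧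
      restr (B.Γs n) (ψ i (x i)) =
        restr (B.Γs (n - 1)) (d (e i).2) +
          restr (B.Γs n \ B.Γs (n - 1)) (d (e i).2) +
          trunc (‖y (e i).1‖ - 1) (y (e i).1))
    (hψ_id : ∀ i, 1 ≤ i → i ≤ I →
      ∀ z ∈ B.D (n - 1) ∪ x '' Set.Icc 1 (i - 1), ψ i z = z)
    (T : ℕ → Linf Γ → Linf Γ)
    (hT_val : ∀ j, 1 ≤ j → T j (y j) = trunc (‖y j‖ - 1) (y j))
    (hT_id : ∀ j k, k < j → T j (y k) = y k)
    (mfun : ℕ → ℕ → ℕ)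
    (hm : ∀ j' j, j' < j → chain T j' j (y j) = trunc ((mfun j j' : ℕ) : ℝ) (y j))
    (i₁ i₂ : ℕ) (hi₁ : 1 ≤ i₁) (h12 : i₁ < i₂) (hi₂ : i₂ ≤ I) :
    chain ψ i₁ I (x i₂) ∈ B.M n ∧
    restr (B.Γs n) (chain ψ i₁ I (x i₂)) =
      restr (B.Γs (n - 1)) (d (e i₂).2) +
        restr (B.Γs n \ B.Γs (n - 1)) (d (e i₂).2) +
        trunc (((if (e i₂).2 ≤ (e i₁).2 then mfun (e i₂).1 (e i₁).1
            else mfun (e i₂).1 ((e i₁).1 - 1)) : ℕ) : ℝ) (y (e i₂).1) :=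
  Psi_apply_x_general B n hn y hy0 hyrange hymono kn d hd_range I e he_mem he_surj he_lex x hx ψ
    hψ_val hψ_id T hT_val hT_id mfun hm i₁ i₂ hi₁ h12 hi₂
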